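/- arXiv:1906.08925 — 3 statements merged into one kernel-verified Lean document; each statement's English description precedes it below -/
import Mathlib

section
/- Let C_d > 0 and u_m > 0. Let x, v : ℝ → ℝ be differentiable with x(0) = 0, v(0) = u_m/C_d, and satisfying x′(t) = v(t), v′(t) = −u_m − C_d·v(t) for all t ≥ 0 (worst-case motion toward an obstacle at top speed under maximal reverse acceleration with drag). Then v(ln 2 / C_d) = 0, x(ln 2 / C_d) = u_m(1 − ln 2)/C_d², and x(t) ≤ u_m(1 − ln 2)/C_d² for all t ≥ 0; i.e., the maximum distance traveled in the direction of initial motion is ρ̄ = u_m(1 − ln 2)/C_d². -/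
/-!
Solve the worst-case motion in closed form. The integrating factor `exp (C_d t)` shows
`v t = (u_m / C_d) (2 e^{-C_d t} - 1)`, and integrating gives
`x t = (u_m / C_d²) (2 - 2 e^{-C_d t} - C_d t)`. The velocity vanishes when `e^{-C_d t} = 1/2`,
i.e. at `t = ln 2 / C_d`, and `s ↦ 2 - 2 e^{-s} - s` is maximal at `s = ln 2`, where it equals
`1 - ln 2`; this bound is `1 + y ≤ e^y` at `y = ln 2 - s`.
-/

open Real

theorem eq_of_deriv_eq_zero_on_Ici {f : ℝ → ℝ} {a t : ℝ} (hf : Differentiable ℝ f)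
    (h : ∀ s, a ≤ s → deriv f s = 0) (ht : a ≤ t) : f t = f a :=
  constant_of_has_deriv_right_zero hf.continuous.continuousOn
    (fun s hs => by simpa [h s hs.1] using (hf s).hasDerivAt.hasDerivWithinAt) t ⟨ht, le_rfl⟩

theorem hasDerivAt_exp_neg_mul (c t : ℝ) :
    HasDerivAt (fun s => exp (-(c * s))) (-c * exp (-(c * t))) t := by
  simpa [mul_comm] using (((hasDerivAt_id t).const_mul c).neg).exp

theorem eq_of_deriv_eq_neg_sub_mul {v : ℝ → ℝ} {a c t : ℝ} (hc : c ≠ 0)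
    (hv : Differentiable ℝ v) (hdv : ∀ s, 0 ≤ s → deriv v s = -a - c * v s) (ht : 0 ≤ t) :
    v t = (v 0 + a / c) * exp (-(c * t)) - a / c := by
  set g : ℝ → ℝ := fun s => exp (c * s) * (v s + a / c)
  have hg_deriv : ∀ s, 0 ≤ s → HasDerivAt g 0 s := fun s hs => by
    have hexp : HasDerivAt (fun s => exp (c * s)) (exp (c * s) * c) s :=
      ((hasDerivAt_id s).const_mul c).exp.congr_deriv (by simp)
    refine (hexp.mul ((hv s).hasDerivAt.add_const (a / c))).congr_deriv ?_
    rw [hdv s hs]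
    field_simp
    ring
  have hg : Differentiable ℝ g := by fun_prop
  have hgt : g t = g 0 := eq_of_deriv_eq_zero_on_Ici hg (fun s hs => (hg_deriv s hs).deriv) ht
  have hcancel : exp (c * t) * exp (-(c * t)) = 1 := by rw [← exp_add]; simp
  simp only [g, mul_zero, exp_zero, one_mul] at hgt
  linear_combination exp (-(c * t)) * hgt - (v t + a / c) * hcancel

theorem eq_of_deriv_eq_mul_exp_neg_sub {x : ℝ → ℝ} {b c d t : ℝ} (hc : c ≠ 0)
    (hx : Differentiable ℝ x) (hdx : ∀ s, 0 ≤ s → deriv x s = b * exp (-(c * s)) - d)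
    (ht : 0 ≤ t) : x t = x 0 + b / c * (1 - exp (-(c * t))) - d * t := by
  set w : ℝ → ℝ := fun s => x s + b / c * exp (-(c * s)) + d * s
  have hw_deriv : ∀ s, 0 ≤ s → HasDerivAt w 0 s := fun s hs => by
    refine (((hx s).hasDerivAt.add ((hasDerivAt_exp_neg_mul c s).const_mul (b / c))).add
      ((hasDerivAt_id s).const_mul d)).congr_deriv ?_
    rw [hdx s hs]
    field_simp
    ring
  have hw : Differentiable ℝ w := by fun_prop
  have hwt : w t = w 0 := eq_of_deriv_eq_zero_on_Ici hw (fun s hs => (hw_deriv s hs).deriv) ht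
  simp only [w, mul_zero, neg_zero, exp_zero, mul_one, add_zero] at hwt
  linear_combination hwt

theorem two_sub_two_mul_exp_neg_sub_le (s : ℝ) : 2 - 2 * exp (-s) - s ≤ 1 - log 2 := by
  have h := add_one_le_exp (log 2 - s)
  rw [exp_sub, exp_log two_pos, div_eq_mul_inv, ← exp_neg] at h
  linarith

/-- Worst-case stopping: with x′ = v, v′ = −u_m − C_d v, x(0) = 0,
v(0) = u_m/C_d, the agent stops at time ln 2/C_d having traveled u_m(1 − ln 2)/C_d²,
and x(t) never exceeds this distance for t ≥ 0. -/
theorem stmt_8 (Cd um : ℝ) (hCd : 0 < Cd) (hum : 0 < um)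
    (x v : ℝ → ℝ) (hx : Differentiable ℝ x) (hv : Differentiable ℝ v)
    (hx0 : x 0 = 0) (hv0 : v 0 = um / Cd)
    (hdx : ∀ t, 0 ≤ t → deriv x t = v t)
    (hdv : ∀ t, 0 ≤ t → deriv v t = -um - Cd * v t) :
    v (Real.log 2 / Cd) = 0 ∧
    x (Real.log 2 / Cd) = um * (1 - Real.log 2) / Cd ^ 2 ∧
    (∀ t, 0 ≤ t → x t ≤ um * (1 - Real.log 2) / Cd ^ 2) := by
  have hv_eq : ∀ t, 0 ≤ t → v t = 2 * um / Cd * exp (-(Cd * t)) - um / Cd := fun t ht => by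
    rw [eq_of_deriv_eq_neg_sub_mul hCd.ne' hv hdv ht, hv0]
    ring
  have hx_eq : ∀ t, 0 ≤ t → x t = um / Cd ^ 2 * (2 - 2 * exp (-(Cd * t)) - Cd * t) :=
    fun t ht => by
      rw [eq_of_deriv_eq_mul_exp_neg_sub hCd.ne' hx (fun s hs => (hdx s hs).trans (hv_eq s hs))
        ht, hx0]
      field_simp
      ring
  have hT : 0 ≤ log 2 / Cd := div_nonneg (log_nonneg one_le_two) hCd.le
  have hCdT : Cd * (log 2 / Cd) = log 2 := mul_div_cancel₀ _ hCd.ne'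
  have hexpT : exp (-(Cd * (log 2 / Cd))) = 1 / 2 := by
    rw [hCdT, exp_neg, exp_log two_pos, one_div]
  refine ⟨?_, ?_, fun t ht => ?_⟩
  · rw [hv_eq _ hT, hexpT]
    ring
  · rw [hx_eq _ hT, hexpT, hCdT]
    ring
  · calc x t = um / Cd ^ 2 * (2 - 2 * exp (-(Cd * t)) - Cd * t) := hx_eq t ht
      _ ≤ um / Cd ^ 2 * (1 - log 2) :=
        mul_le_mul_of_nonneg_left (two_sub_two_mul_exp_neg_sub_le _) (by positivity)
      _ = um * (1 - log 2) / Cd ^ 2 := by ring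
end

section
/- Let k₁, k₂ > 0, let α₂ ∈ (0,1) and α₁ = α₂/(2−α₂), and define sig^α(x) = ‖x‖^{α−1} x for x ∈ ℝ² \ {0} and sig^α(0) = 0. Then for every pair of differentiable functions r, v : ℝ≥0 → ℝ² satisfying ṙ(t) = v(t) and v̇(t) = −k₂ sig^{α₂}(v(t)) − k₁ sig^{α₁}(r(t)) for all t ≥ 0, there exists a finite time T ≥ 0 such that r(t) = 0 and v(t) = 0 for all t ≥ T; i.e., the origin (r, v) = (0, 0) is globally finite-time stable. -/
/-!
With `p = α₁ + 1`, the energy `E = k₁/p ‖r‖^p + ‖v‖²/2` satisfies `Ė = -k₂ ‖v‖^(α₂+1) ≤ 0`,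
which is only negative semidefinite. Adding the cross term `ε ⟪r, v⟫` repairs this: with
`s = 1/p + 1/2 = (3 - α₂)/2`, both `E^s` and `⟪r, v⟫` are homogeneous of the same degree for the
dilation under which the closed loop is homogeneous, so for small `ε > 0` the function
`V = E^s + ε ⟪r, v⟫` is comparable to `E^s` and satisfies `V̇ ≤ -c V^(1/s)`. Since `1/s < 1`,
such a differential inequality drives `V`, hence `E`, to zero in finite time.
-/

open Real Set

theorem rpow_one_sub_le_of_hasDerivAt_le_neg_mul_rpow {W W' : ℝ → ℝ} {a b c θ : ℝ} (hab : a ≤ b)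
    (hθ : θ < 1) (hW : ∀ t ∈ Icc a b, HasDerivAt W (W' t) t) (hpos : ∀ t ∈ Icc a b, 0 < W t)
    (hW' : ∀ t ∈ Icc a b, W' t ≤ -c * W t ^ θ) :
    W b ^ (1 - θ) ≤ W a ^ (1 - θ) - c * (1 - θ) * (b - a) := by
  have hG : ∀ t ∈ Icc a b,
      HasDerivAt (fun u => W u ^ (1 - θ)) (W' t * (1 - θ) * W t ^ (1 - θ - 1)) t :=
    fun t ht => (hW t ht).rpow_const (Or.inl (hpos t ht).ne')
  have hG' : ∀ t ∈ interior (Icc a b), deriv (fun u => W u ^ (1 - θ)) t ≤ -c * (1 - θ) := by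
    intro t ht
    have ht' := interior_subset ht
    rw [(hG t ht').deriv]
    have hWθ : W t ^ θ * W t ^ (1 - θ - 1) = 1 := by
      rw [← rpow_add (hpos t ht')]; norm_num
    calc W' t * (1 - θ) * W t ^ (1 - θ - 1)
        ≤ -c * W t ^ θ * (1 - θ) * W t ^ (1 - θ - 1) := by
          have := rpow_nonneg (hpos t ht').le (1 - θ - 1)
          have := hW' t ht'
          gcongr
      _ = -c * (1 - θ) := by linear_combination (-c * (1 - θ)) * hWθ
  have := (convex_Icc a b).image_sub_le_mul_sub_of_deriv_le
    (fun t ht => (hG t ht).continuousAt.continuousWithinAt)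
    (fun t ht => (hG t (interior_subset ht)).differentiableAt.differentiableWithinAt)
    hG' a (left_mem_Icc.2 hab) b (right_mem_Icc.2 hab) hab
  linarith

theorem exists_eq_zero_of_hasDerivAt_le_neg_mul_rpow {W W' : ℝ → ℝ} {c θ : ℝ} (hc : 0 < c)
    (hθ : θ < 1) (hW : ∀ t, 0 ≤ t → HasDerivAt W (W' t) t) (hW₀ : ∀ t, 0 ≤ t → 0 ≤ W t)
    (hW' : ∀ t, 0 ≤ t → W' t ≤ -c * W t ^ θ) :
    ∃ T, 0 ≤ T ∧ ∀ t, T ≤ t → W t = 0 := by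
  have hanti : AntitoneOn W (Ici 0) :=
    antitoneOn_of_hasDerivWithinAt_nonpos (convex_Ici 0)
      (fun t ht => (hW t ht).continuousAt.continuousWithinAt)
      (fun t ht => (hW t (interior_subset ht)).hasDerivWithinAt)
      (fun t ht => (hW' t (interior_subset ht)).trans <| mul_nonpos_of_nonpos_of_nonneg
        (neg_nonpos.2 hc.le) (rpow_nonneg (hW₀ t (interior_subset ht)) θ))
  set T := W 0 ^ (1 - θ) / (c * (1 - θ))
  have hcθ : 0 < c * (1 - θ) := mul_pos hc (by linarith)
  have hT : 0 ≤ T := div_nonneg (rpow_nonneg (hW₀ 0 le_rfl) _) hcθ.le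
  have hWT : W T = 0 := by
    by_contra hne
    have hpos : ∀ t ∈ Icc 0 T, 0 < W t := fun t ht =>
      ((hW₀ T hT).lt_of_ne' hne).trans_le (hanti ht.1 hT ht.2)
    have := rpow_one_sub_le_of_hasDerivAt_le_neg_mul_rpow hT hθ (fun t ht => hW t ht.1) hpos
      (fun t ht => hW' t ht.1)
    have hcT : c * (1 - θ) * (T - 0) = W 0 ^ (1 - θ) := by
      rw [sub_zero]; exact mul_div_cancel₀ _ hcθ.ne'
    have := rpow_pos_of_pos (hpos T (right_mem_Icc.2 hT)) (1 - θ)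
    linarith
  exact ⟨T, hT, fun t ht => le_antisymm (hWT ▸ hanti hT (hT.trans ht) ht) (hW₀ t (hT.trans ht))⟩

theorem exists_mul_le_mul_rpow_add_mul_rpow {p q δ : ℝ} (hpq : p.HolderConjugate q) (hδ : 0 < δ) :
    ∃ K, 0 ≤ K ∧ ∀ a b : ℝ, 0 ≤ a → 0 ≤ b → a * b ≤ δ * a ^ p + K * b ^ q := by
  have hp := hpq.pos
  have hq := hpq.symm.pos
  set μ := (δ * p) ^ p⁻¹
  have hμ : 0 < μ := by positivity
  have hμp : μ ^ p = δ * p := rpow_inv_rpow (by positivity) hp.ne'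
  refine ⟨(μ ^ q * q)⁻¹, by positivity, fun a b ha hb => ?_⟩
  have hy := young_inequality_of_nonneg (mul_nonneg hμ.le ha) (div_nonneg hb hμ.le) hpq
  rw [mul_rpow hμ.le ha, div_rpow hb hμ.le, hμp] at hy
  calc a * b = μ * a * (b / μ) := by field_simp
    _ ≤ δ * p * a ^ p / p + b ^ q / μ ^ q / q := hy
    _ = δ * a ^ p + (μ ^ q * q)⁻¹ * b ^ q := by field_simp

theorem mul_le_rpow_inv_mul_rpow_inv {a b A B p q : ℝ} (ha : 0 ≤ a) (hb : 0 ≤ b) (hp : 0 < p)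
    (hq : 0 < q) (hA : a ^ p ≤ A) (hB : b ^ q ≤ B) : a * b ≤ A ^ p⁻¹ * B ^ q⁻¹ :=
  mul_le_mul ((le_rpow_inv_iff_of_pos ha ((rpow_nonneg ha p).trans hA) hp).2 hA)
    ((le_rpow_inv_iff_of_pos hb ((rpow_nonneg hb q).trans hB) hq).2 hB) hb
    (rpow_nonneg ((rpow_nonneg ha p).trans hA) _)

theorem sq_le_rpow_mul_rpow {b B α : ℝ} (hb : 0 ≤ b) (hB : b ^ 2 ≤ B) (hα : α ≤ 1) :
    b ^ 2 ≤ B ^ ((1 - α) / 2) * b ^ (α + 1) := by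
  have h : (2 : ℝ) * ((1 - α) / 2) + (α + 1) = 2 := by ring
  have hsplit : b ^ 2 = (b ^ 2) ^ ((1 - α) / 2) * b ^ (α + 1) := by
    rw [← rpow_natCast_mul hb, Nat.cast_ofNat, ← rpow_add' hb (by rw [h]; norm_num), h,
      rpow_two]
  calc b ^ 2 = (b ^ 2) ^ ((1 - α) / 2) * b ^ (α + 1) := hsplit
    _ ≤ B ^ ((1 - α) / 2) * b ^ (α + 1) := by gcongr

noncomputable def energy (k₁ p a b : ℝ) : ℝ := k₁ / p * a ^ p + b ^ 2 / 2

section energy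

variable {k₁ p a b : ℝ}

theorem energy_nonneg (hk₁ : 0 ≤ k₁) (hp : 0 ≤ p) (ha : 0 ≤ a) : 0 ≤ energy k₁ p a b := by
  unfold energy; positivity

theorem rpow_le_energy (hk₁ : 0 < k₁) (hp : 0 < p) : a ^ p ≤ p / k₁ * energy k₁ p a b :=
  calc a ^ p = p / k₁ * (k₁ / p * a ^ p) := by field_simp
    _ ≤ p / k₁ * energy k₁ p a b := by
        unfold energy; gcongr; exact le_add_of_nonneg_right (by positivity)

theorem sq_le_energy (hk₁ : 0 ≤ k₁) (hp : 0 ≤ p) (ha : 0 ≤ a) : b ^ 2 ≤ 2 * energy k₁ p a b := by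
  unfold energy
  have : 0 ≤ k₁ / p * a ^ p := by positivity
  linarith

theorem energy_eq_zero_iff (hk₁ : 0 < k₁) (hp : 0 < p) (ha : 0 ≤ a) :
    energy k₁ p a b = 0 ↔ a = 0 ∧ b = 0 := by
  have hap : 0 ≤ k₁ / p * a ^ p := by positivity
  rw [energy, add_eq_zero_iff_of_nonneg hap (by positivity), mul_eq_zero,
    rpow_eq_zero ha hp.ne']
  simp [hk₁.ne', hp.ne']

theorem mul_le_energy_rpow (hk₁ : 0 < k₁) (hp : 0 < p) (ha : 0 ≤ a) (hb : 0 ≤ b) :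
    a * b ≤ (p / k₁) ^ p⁻¹ * 2 ^ (2⁻¹ : ℝ) * energy k₁ p a b ^ (p⁻¹ + 2⁻¹) := by
  have he := energy_nonneg (b := b) hk₁.le hp.le ha
  calc a * b ≤ (p / k₁ * energy k₁ p a b) ^ p⁻¹ * (2 * energy k₁ p a b) ^ (2 : ℝ)⁻¹ :=
        mul_le_rpow_inv_mul_rpow_inv ha hb hp two_pos (rpow_le_energy hk₁ hp)
          (by rw [rpow_two]; exact sq_le_energy hk₁.le hp.le ha)
    _ = _ := by
      rw [mul_rpow (by positivity) he, mul_rpow zero_le_two he, rpow_add' he (by positivity)]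
      ring

theorem sq_le_energy_rpow_mul {α : ℝ} (hk₁ : 0 ≤ k₁) (hp : 0 ≤ p) (ha : 0 ≤ a) (hb : 0 ≤ b)
    (hα : α ≤ 1) :
    b ^ 2 ≤ 2 ^ ((1 - α) / 2) * (energy k₁ p a b ^ ((1 - α) / 2) * b ^ (α + 1)) := by
  rw [← mul_assoc, ← mul_rpow zero_le_two (energy_nonneg hk₁ hp ha)]
  exact sq_le_rpow_mul_rpow hb (sq_le_energy hk₁ hp ha) hα

end energy

theorem exists_mul_mul_rpow_le_add {k₁ k₂ α p : ℝ} (hk₁ : 0 < k₁) (hk₂ : 0 < k₂) (hα : 0 < α)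
    (hpq : p.HolderConjugate (2 / α)) :
    ∃ K, 0 ≤ K ∧ ∀ a b : ℝ, 0 ≤ a → 0 ≤ b → k₂ * a * b ^ α ≤ k₁ / 2 * a ^ p + K * b ^ 2 := by
  obtain ⟨K, hK, hyoung⟩ :=
    exists_mul_le_mul_rpow_add_mul_rpow hpq (by positivity : 0 < k₁ / (2 * k₂))
  refine ⟨k₂ * K, by positivity, fun a b ha hb => ?_⟩
  have h := mul_le_mul_of_nonneg_left (hyoung a (b ^ α) ha (rpow_nonneg hb α)) hk₂.le
  rw [← rpow_mul hb, mul_div_cancel₀ _ hα.ne', rpow_two] at h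
  calc k₂ * a * b ^ α = k₂ * (a * b ^ α) := by ring
    _ ≤ k₂ * (k₁ / (2 * k₂) * a ^ p + K * b ^ 2) := h
    _ = k₁ / 2 * a ^ p + k₂ * K * b ^ 2 := by field_simp

theorem abs_mul_le_half_energy_rpow {k₁ p a b x ε : ℝ} (hk₁ : 0 < k₁) (hp : 0 < p) (ha : 0 ≤ a)
    (hb : 0 ≤ b) (hε : 0 ≤ ε) (hεC : ε * ((p / k₁) ^ p⁻¹ * 2 ^ (2⁻¹ : ℝ)) ≤ 2⁻¹)
    (hx : |x| ≤ a * b) : |ε * x| ≤ energy k₁ p a b ^ (p⁻¹ + 2⁻¹) / 2 := by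
  rw [abs_mul, abs_of_nonneg hε]
  calc ε * |x| ≤ ε * ((p / k₁) ^ p⁻¹ * 2 ^ (2⁻¹ : ℝ) * energy k₁ p a b ^ (p⁻¹ + 2⁻¹)) :=
        mul_le_mul_of_nonneg_left (hx.trans (mul_le_energy_rpow hk₁ hp ha hb)) hε
    _ = ε * ((p / k₁) ^ p⁻¹ * 2 ^ (2⁻¹ : ℝ)) * energy k₁ p a b ^ (p⁻¹ + 2⁻¹) := by ring
    _ ≤ 2⁻¹ * energy k₁ p a b ^ (p⁻¹ + 2⁻¹) := by
        gcongr
        exact rpow_nonneg (energy_nonneg hk₁.le hp.le ha) _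
    _ = _ := by ring

theorem lyapunov_deriv_le {k₁ k₂ α p s K ε a b y : ℝ} (hk₁ : 0 < k₁) (hp : 0 < p)
    (hα : α ≤ 1) (hs : s - 1 = (1 - α) / 2) (ha : 0 ≤ a) (hb : 0 ≤ b)
    (hK₀ : 0 ≤ K) (hK : k₂ * a * b ^ α ≤ k₁ / 2 * a ^ p + K * b ^ 2) (hε : 0 ≤ ε)
    (hεK : ε * (1 + K) * 2 ^ (s - 1) ≤ s * k₂ / 2) (hy : y ≤ k₂ * a * b ^ α - k₁ * a ^ p) :
    -k₂ * b ^ (α + 1) * s * energy k₁ p a b ^ (s - 1) + ε * (y + b ^ 2) ≤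
      -(s * k₂ / 2) * (energy k₁ p a b ^ (s - 1) * b ^ (α + 1)) - ε * k₁ / 2 * a ^ p := by
  set G := energy k₁ p a b ^ (s - 1) * b ^ (α + 1)
  have hG : 0 ≤ G := mul_nonneg (rpow_nonneg (energy_nonneg hk₁.le hp.le ha) _) (rpow_nonneg hb _)
  have hbG : b ^ 2 ≤ 2 ^ (s - 1) * G := by
    have := sq_le_energy_rpow_mul (k₁ := k₁) (p := p) hk₁.le hp.le ha hb hα
    rwa [← hs] at this
  have h₁ : y + b ^ 2 ≤ -(k₁ / 2) * a ^ p + (1 + K) * (2 ^ (s - 1) * G) := by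
    have := mul_le_mul_of_nonneg_left hbG (by positivity : 0 ≤ 1 + K)
    linarith
  have h₂ := mul_le_mul_of_nonneg_left h₁ hε
  have h₃ := mul_le_mul_of_nonneg_right hεK hG
  linarith

theorem min_mul_energy_le {k₁ p α s a b A B : ℝ} (hk₁ : 0 < k₁) (hp : 0 < p) (hα : α ≤ 1)
    (hs : s - 1 = (1 - α) / 2) (ha : 0 ≤ a) (hb : 0 ≤ b) (hA : 0 ≤ A) (hB : 0 ≤ B) :
    min (2 * A / 2 ^ (s - 1)) (B * p / k₁) * energy k₁ p a b ≤
      A * (energy k₁ p a b ^ (s - 1) * b ^ (α + 1)) + B * a ^ p := by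
  set c := min (2 * A / 2 ^ (s - 1)) (B * p / k₁)
  set G := energy k₁ p a b ^ (s - 1) * b ^ (α + 1)
  have hc : 0 ≤ c := by positivity
  have hG : 0 ≤ G := mul_nonneg (rpow_nonneg (energy_nonneg hk₁.le hp.le ha) _) (rpow_nonneg hb _)
  have he : energy k₁ p a b ≤ k₁ / p * a ^ p + 2 ^ (s - 1) / 2 * G := by
    have := hs ▸ sq_le_energy_rpow_mul (k₁ := k₁) (p := p) hk₁.le hp.le ha hb hα
    rw [energy]
    linarith
  have hcA : c * (2 ^ (s - 1) / 2) ≤ A :=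
    calc c * (2 ^ (s - 1) / 2) ≤ 2 * A / 2 ^ (s - 1) * (2 ^ (s - 1) / 2) := by
          gcongr; exact min_le_left _ _
      _ = A := by field_simp
  have hcB : c * (k₁ / p) ≤ B :=
    calc c * (k₁ / p) ≤ B * p / k₁ * (k₁ / p) := by gcongr; exact min_le_right _ _
      _ = B := by field_simp
  calc c * energy k₁ p a b ≤ c * (k₁ / p * a ^ p + 2 ^ (s - 1) / 2 * G) := by gcongr
    _ = c * (2 ^ (s - 1) / 2) * G + c * (k₁ / p) * a ^ p := by ring
    _ ≤ A * G + B * a ^ p := by gcongr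

theorem rpow_inv_le_two_mul {V e s : ℝ} (he : 0 ≤ e) (hs : 1 ≤ s) (hV₀ : 0 ≤ V)
    (hV : V ≤ 2 * e ^ s) : V ^ s⁻¹ ≤ 2 * e :=
  calc V ^ s⁻¹ ≤ (2 * e ^ s) ^ s⁻¹ := rpow_le_rpow hV₀ hV (by positivity)
    _ = 2 ^ s⁻¹ * e := by
        rw [mul_rpow zero_le_two (rpow_nonneg he s), rpow_rpow_inv he (by positivity)]
    _ ≤ 2 * e := by
        gcongr
        simpa using rpow_le_rpow_of_exponent_le one_le_two (inv_le_one_of_one_le₀ hs)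

theorem exists_strict_lyapunov {k₁ k₂ α p s : ℝ} (hk₁ : 0 < k₁) (hk₂ : 0 < k₂) (hα₀ : 0 < α)
    (hα₁ : α < 1) (hp : p⁻¹ + α / 2 = 1) (hs : s = p⁻¹ + 2⁻¹) :
    ∃ ε c : ℝ, 0 < c ∧ ∀ a b x y : ℝ, 0 ≤ a → 0 ≤ b → |x| ≤ a * b →
      y ≤ k₂ * a * b ^ α - k₁ * a ^ p →
      energy k₁ p a b ^ s ≤ 2 * (energy k₁ p a b ^ s + ε * x) ∧
      -k₂ * b ^ (α + 1) * s * energy k₁ p a b ^ (s - 1) + ε * (y + b ^ 2) ≤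
        -c * (energy k₁ p a b ^ s + ε * x) ^ s⁻¹ := by
  have hp₀ : 0 < p := inv_pos.1 (by linarith)
  have hs₁ : s - 1 = (1 - α) / 2 := by rw [hs]; linarith
  have hs₀ : 1 < s := by linarith
  obtain ⟨K, hK₀, hK⟩ := exists_mul_mul_rpow_le_add hk₁ hk₂ hα₀
    (Real.holderConjugate_iff.2 ⟨(inv_lt_one₀ hp₀).1 (by linarith), by rw [inv_div]; linarith⟩)
  set C := (p / k₁) ^ p⁻¹ * (2 : ℝ) ^ (2⁻¹ : ℝ)
  set M := (2 : ℝ) ^ (s - 1)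
  have hC : 0 < C := by positivity
  have hM : 0 < M := by positivity
  -- `ε` keeps the cross term below `E^s / 2` and lets half of the dissipation absorb `ε ‖v‖²`.
  set ε := min (2 * C)⁻¹ (s * k₂ / (2 * (1 + K) * M))
  have hε : 0 < ε := by positivity
  have hεC : ε * C ≤ 2⁻¹ :=
    calc ε * C ≤ (2 * C)⁻¹ * C := by gcongr; exact min_le_left _ _
      _ = 2⁻¹ := by field_simp
  have hεK : ε * (1 + K) * M ≤ s * k₂ / 2 :=
    calc ε * (1 + K) * M ≤ s * k₂ / (2 * (1 + K) * M) * (1 + K) * M := by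
          gcongr; exact min_le_right _ _
      _ = s * k₂ / 2 := by field_simp
  set c₀ := min (2 * (s * k₂ / 2) / M) (ε * k₁ / 2 * p / k₁)
  have hc₀ : 0 < c₀ := by positivity
  refine ⟨ε, c₀ / 2, by positivity, fun a b x y ha hb hx hy => ?_⟩
  set e := energy k₁ p a b
  have he : 0 ≤ e := energy_nonneg hk₁.le hp₀.le ha
  have hcross := abs_mul_le_half_energy_rpow hk₁ hp₀ ha hb hε.le hεC hx
  rw [← hs] at hcross
  have hV₀ : e ^ s ≤ 2 * (e ^ s + ε * x) := by linarith [abs_le.1 hcross, rpow_nonneg he s]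
  have hV₁ : e ^ s + ε * x ≤ 2 * e ^ s := by linarith [abs_le.1 hcross, rpow_nonneg he s]
  have hc₀e := min_mul_energy_le hk₁ hp₀ hα₁.le hs₁ ha hb (A := s * k₂ / 2)
    (B := ε * k₁ / 2) (by positivity) (by positivity)
  have hroot := mul_le_mul_of_nonneg_left
    (rpow_inv_le_two_mul he (by linarith) (by linarith [rpow_nonneg he s]) hV₁) hc₀.le
  have hderiv := lyapunov_deriv_le hk₁ hp₀ hα₁.le hs₁ ha hb hK₀ (hK a b ha hb) hε.le hεK hy
  exact ⟨hV₀, by linarith⟩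

section InnerProductSpace

variable {E : Type*} [NormedAddCommGroup E] [InnerProductSpace ℝ E]

noncomputable def sigPow (α : ℝ) (y : E) : E := ‖y‖ ^ (α - 1) • y

noncomputable def sigFeedback (k₁ k₂ α₁ α₂ : ℝ) (x y : E) : E :=
  -k₂ • sigPow α₂ y - k₁ • sigPow α₁ x

theorem inner_self_sigPow {α : ℝ} (hα : α + 1 ≠ 0) (y : E) :
    inner ℝ y (sigPow α y) = ‖y‖ ^ (α + 1) := by
  have h : α - 1 + 2 = α + 1 := by ring
  rw [sigPow, real_inner_smul_right, real_inner_self_eq_norm_sq, ← rpow_two,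
    ← rpow_add' (norm_nonneg y) (h ▸ hα), h]

theorem norm_sigPow {α : ℝ} (hα : α ≠ 0) (y : E) : ‖sigPow α y‖ = ‖y‖ ^ α := by
  rw [sigPow, norm_smul, norm_of_nonneg (rpow_nonneg (norm_nonneg y) _),
    ← rpow_add_one' (norm_nonneg y) (by simpa using hα), sub_add_cancel]

theorem inner_sigFeedback_le {k₁ k₂ α₁ α₂ : ℝ} (hk₂ : 0 ≤ k₂) (hα₁ : α₁ + 1 ≠ 0) (hα₂ : α₂ ≠ 0)
    (x y : E) :
    inner ℝ x (sigFeedback k₁ k₂ α₁ α₂ x y) ≤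
      k₂ * ‖x‖ * ‖y‖ ^ α₂ - k₁ * ‖x‖ ^ (α₁ + 1) := by
  have h := (abs_le.1 ((abs_real_inner_le_norm x (sigPow α₂ y)).trans_eq
    (by rw [norm_sigPow hα₂]))).1
  rw [sigFeedback, inner_sub_right, real_inner_smul_right, real_inner_smul_right,
    inner_self_sigPow hα₁]
  linarith [mul_le_mul_of_nonneg_left h hk₂]

theorem hasDerivAt_energy {k₁ k₂ α₁ α₂ t : ℝ} {r v : ℝ → E} (hα₁ : 0 < α₁) (hα₂ : α₂ + 1 ≠ 0)
    (hr : HasDerivAt r (v t) t)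
    (hv : HasDerivAt v (sigFeedback k₁ k₂ α₁ α₂ (r t) (v t)) t) :
    HasDerivAt (fun u => energy k₁ (α₁ + 1) ‖r u‖ ‖v u‖) (-k₂ * ‖v t‖ ^ (α₂ + 1)) t := by
  have hpot := ((hasFDerivAt_norm_rpow (r t) (by linarith : 1 < α₁ + 1)).comp_hasDerivAt t
    hr).const_mul (k₁ / (α₁ + 1))
  have hkin := hv.norm_sq.div_const 2
  refine (hpot.add hkin).congr_deriv ?_
  rw [smul_apply, innerSL_apply_apply, smul_eq_mul, sigFeedback, inner_sub_right,
    real_inner_smul_right, real_inner_smul_right, inner_self_sigPow hα₂, sigPow,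
    real_inner_smul_right, real_inner_comm, show α₁ + 1 - 2 = α₁ - 1 by ring]
  field_simp
  ring

theorem hasDerivAt_lyapunov {k₁ k₂ α₁ α₂ s ε t : ℝ} {r v : ℝ → E} (hα₁ : 0 < α₁)
    (hα₂ : α₂ + 1 ≠ 0) (hs : 1 ≤ s) (hr : HasDerivAt r (v t) t)
    (hv : HasDerivAt v (sigFeedback k₁ k₂ α₁ α₂ (r t) (v t)) t) :
    HasDerivAt (fun u => energy k₁ (α₁ + 1) ‖r u‖ ‖v u‖ ^ s + ε * inner ℝ (r u) (v u))
      (-k₂ * ‖v t‖ ^ (α₂ + 1) * s * energy k₁ (α₁ + 1) ‖r t‖ ‖v t‖ ^ (s - 1) +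
        ε * (inner ℝ (r t) (sigFeedback k₁ k₂ α₁ α₂ (r t) (v t)) + ‖v t‖ ^ 2)) t := by
  have := ((hasDerivAt_energy hα₁ hα₂ hr hv).rpow_const (Or.inr hs)).add
    ((hr.inner ℝ hv).const_mul ε)
  rwa [real_inner_self_eq_norm_sq] at this

theorem exists_eq_zero_of_sigFeedback {k₁ k₂ α₁ α₂ : ℝ} (hk₁ : 0 < k₁) (hk₂ : 0 < k₂)
    (hα₂ : α₂ ∈ Set.Ioo 0 1) (hα₁ : α₁ = α₂ / (2 - α₂)) {r v : ℝ → E}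
    (hr : ∀ t, 0 ≤ t → HasDerivAt r (v t) t)
    (hv : ∀ t, 0 ≤ t → HasDerivAt v (sigFeedback k₁ k₂ α₁ α₂ (r t) (v t)) t) :
    ∃ T, 0 ≤ T ∧ ∀ t, T ≤ t → r t = 0 ∧ v t = 0 := by
  obtain ⟨hα₂₀, hα₂₁⟩ := hα₂
  have hα₁₀ : 0 < α₁ := hα₁ ▸ div_pos hα₂₀ (by linarith)
  have hp₀ : 0 ≤ α₁ + 1 := by linarith
  have hp : (α₁ + 1)⁻¹ + α₂ / 2 = 1 := by
    rw [hα₁]; field_simp [(by linarith : 2 - α₂ ≠ 0)]; ring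
  set s := (α₁ + 1)⁻¹ + 2⁻¹ with hs
  have hs₁ : 1 < s := by linarith
  obtain ⟨ε, c, hc, hV⟩ := exists_strict_lyapunov hk₁ hk₂ hα₂₀ hα₂₁ hp hs
  have he₀ : ∀ t, 0 ≤ energy k₁ (α₁ + 1) ‖r t‖ ‖v t‖ ^ s := fun t =>
    rpow_nonneg (energy_nonneg hk₁.le hp₀ (norm_nonneg _)) s
  have hbound := fun t => hV ‖r t‖ ‖v t‖ (inner ℝ (r t) (v t))
    (inner ℝ (r t) (sigFeedback k₁ k₂ α₁ α₂ (r t) (v t))) (norm_nonneg _)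
    (norm_nonneg _) (abs_real_inner_le_norm _ _)
    (inner_sigFeedback_le hk₂.le (by linarith) hα₂₀.ne' _ _)
  obtain ⟨T, hT, hzero⟩ := exists_eq_zero_of_hasDerivAt_le_neg_mul_rpow hc
    (inv_lt_one_of_one_lt₀ hs₁)
    (fun t ht => hasDerivAt_lyapunov hα₁₀ (by linarith) hs₁.le (hr t ht) (hv t ht))
    (fun t _ => by linarith [(hbound t).1, he₀ t]) (fun t _ => (hbound t).2)
  refine ⟨T, hT, fun t ht => ?_⟩
  have he : energy k₁ (α₁ + 1) ‖r t‖ ‖v t‖ = 0 := by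
    have h := (hbound t).1
    rw [hzero t ht, mul_zero] at h
    exact (rpow_eq_zero (energy_nonneg hk₁.le hp₀ (norm_nonneg _)) (by positivity)).1
      (le_antisymm h (he₀ t))
  simpa using (energy_eq_zero_iff hk₁ (by linarith) (norm_nonneg (r t))).1 he

end InnerProductSpace

/-- Finite-time stability of the double integrator under the
sig-function feedback ṙ = v, v̇ = −k₂ sig^{α₂}(v) − k₁ sig^{α₁}(r) with k₁, k₂ > 0,
α₂ ∈ (0,1), α₁ = α₂/(2−α₂): every trajectory reaches the origin in finite time and
stays there. -/
theorem stmt_12 (k₁ k₂ α₁ α₂ : ℝ) (hk₁ : 0 < k₁) (hk₂ : 0 < k₂)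
    (hα₂ : α₂ ∈ Set.Ioo (0 : ℝ) 1) (hα₁ : α₁ = α₂ / (2 - α₂))
    (sig : ℝ → EuclideanSpace ℝ (Fin 2) → EuclideanSpace ℝ (Fin 2))
    (hsig : ∀ (α : ℝ) (y : EuclideanSpace ℝ (Fin 2)), y ≠ 0 →
      sig α y = ‖y‖ ^ (α - 1) • y)
    (hsig0 : ∀ α : ℝ, sig α 0 = 0)
    (r v : ℝ → EuclideanSpace ℝ (Fin 2))
    (hr : Differentiable ℝ r) (hv : Differentiable ℝ v)
    (hdr : ∀ t, 0 ≤ t → deriv r t = v t)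
    (hdv : ∀ t, 0 ≤ t → deriv v t = -k₂ • sig α₂ (v t) - k₁ • sig α₁ (r t)) :
    ∃ T, 0 ≤ T ∧ ∀ t, T ≤ t → r t = 0 ∧ v t = 0 := by
  obtain rfl : sig = sigPow := by
    ext1 α; ext1 y
    rcases eq_or_ne y 0 with rfl | hy
    · simp [hsig0, sigPow]
    · exact hsig α y hy
  exact exists_eq_zero_of_sigFeedback hk₁ hk₂ hα₂ hα₁
    (fun t ht => hdr t ht ▸ (hr t).hasDerivAt)
    (fun t ht => by rw [sigFeedback, ← hdv t ht]; exact (hv t).hasDerivAt)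
end

section
/- Let k₁, C_d, u_m > 0 and define the saturation σ(u) = u if ‖u‖ ≤ u_m and σ(u) = u_m·u/‖u‖ otherwise, and the function V(r̄, v) = k₁‖r̄‖²/2 + ‖v‖²/2 if ‖r̄‖ < u_m/k₁, V(r̄, v) = u_m‖r̄‖ + ‖v‖²/2 − u_m²/(2k₁) otherwise. Then for every pair of differentiable functions r̄, v : ℝ≥0 → ℝ² satisfying ṙ̄(t) = v(t) and v̇(t) = σ(−k₁ r̄(t)) − C_d v(t), the function t ↦ V(r̄(t), v(t)) is differentiable with derivative equal to −C_d‖v(t)‖² for all t ≥ 0; in particular V is non-increasing along trajectories. -/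
/-!
`V` is the kinetic energy `‖v‖² / 2` plus the potential `satPotential k₁ u_m`, whose gradient at `r̄` is
`σ(k₁ r̄)`. Since `σ` is odd, along the flow
`dV/dt = ⟪σ(k₁ r̄), v⟫ + ⟪v, -σ(k₁ r̄) - C_d v⟫ = -C_d ‖v‖²`.
The potential is differentiable even across the saturation sphere `k₁ ‖r̄‖ = u_m`, because
there it differs from the quadratic `k₁ ‖r̄‖² / 2` by the square of a positive part.
-/

open Filter Topology
open scoped RealInnerProductSpace

theorem hasDerivAt_max_zero_sq (x : ℝ) :
    HasDerivAt (fun y : ℝ => max y 0 ^ 2) (2 * max x 0) x := by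
  have off_zero : ∀ y ≠ (0 : ℝ), HasDerivAt (fun y : ℝ => max y 0 ^ 2) (2 * max y 0) y := by
    intro y hy
    rcases hy.lt_or_gt with hneg | hpos
    · have hzero : (fun y : ℝ => max y 0 ^ 2) =ᶠ[𝓝 y] fun _ => 0 := by
        filter_upwards [eventually_lt_nhds hneg] with z hz
        simp [max_eq_right hz.le]
      simpa [max_eq_right hneg.le] using (hasDerivAt_const y (0 : ℝ)).congr_of_eventuallyEq hzero
    · have hsq : (fun y : ℝ => max y 0 ^ 2) =ᶠ[𝓝 y] fun z => z ^ 2 := by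
        filter_upwards [eventually_gt_nhds hpos] with z hz
        simp [max_eq_left hz.le]
      simpa [max_eq_left hpos.le, mul_comm] using (hasDerivAt_pow 2 y).congr_of_eventuallyEq hsq
  rcases eq_or_ne x 0 with rfl | hx
  · exact hasDerivAt_of_hasDerivAt_of_ne off_zero (by fun_prop) (by fun_prop)
  · exact off_zero x hx

noncomputable def satPotential {E : Type*} [Norm E] (k um : ℝ) (r : E) : ℝ :=
  k * ‖r‖ ^ 2 / 2 - max (k * ‖r‖ - um) 0 ^ 2 / (2 * k)

theorem satPotential_eq_ite {E : Type*} [Norm E] {k : ℝ} (hk : 0 < k) (um : ℝ) (r : E) :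
    satPotential k um r =
      if ‖r‖ < um / k then k * ‖r‖ ^ 2 / 2 else um * ‖r‖ - um ^ 2 / (2 * k) := by
  rw [satPotential]
  split_ifs with h
  · rw [lt_div_iff₀ hk] at h
    rw [max_eq_right (by linarith)]
    ring
  · rw [not_lt, div_le_iff₀ hk] at h
    rw [max_eq_left (by linarith)]
    field_simp
    ring

variable {E : Type*} [NormedAddCommGroup E] [InnerProductSpace ℝ E]

noncomputable def saturate (um : ℝ) (u : E) : E := if ‖u‖ ≤ um then u else (um / ‖u‖) • u

theorem saturate_neg (um : ℝ) (u : E) : saturate um (-u) = -saturate um u := by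
  simp only [saturate, norm_neg, smul_neg]
  split_ifs <;> rfl

theorem saturate_smul (um : ℝ) {k : ℝ} (hk : 0 < k) (r : E) :
    saturate um (k • r) = k • r - (max (k * ‖r‖ - um) 0 / ‖r‖) • r := by
  rw [saturate, norm_smul, Real.norm_of_nonneg hk.le]
  split_ifs with h
  · rw [max_eq_right (by linarith), zero_div, zero_smul, sub_zero]
  · rcases eq_or_ne r 0 with rfl | hr
    · simp
    rw [max_eq_left (by linarith), smul_smul, ← sub_smul]
    congr 1
    field_simp
    ring

theorem hasFDerivAt_norm {r : E} (hr : r ≠ 0) :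
    HasFDerivAt (fun x : E => ‖x‖) (‖r‖⁻¹ • innerSL ℝ r) r := by
  have hsqrt := (hasStrictFDerivAt_norm_sq r).hasFDerivAt.sqrt (by simpa using hr)
  simp only [Real.sqrt_sq (norm_nonneg _)] at hsqrt
  refine hsqrt.congr_fderiv ?_
  ext y
  simp
  field_simp

theorem hasFDerivAt_satPotential {k um : ℝ} (hk : 0 < k) (hum : 0 < um) (r : E) :
    HasFDerivAt (satPotential k um) (innerSL ℝ (saturate um (k • r))) r := by
  rw [saturate_smul um hk]
  have hquad : HasFDerivAt (fun x : E => k * ‖x‖ ^ 2 / 2) (innerSL ℝ (k • r)) r := by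
    have hf : (fun x : E => k * ‖x‖ ^ 2 / 2) = fun x => k / 2 * ‖x‖ ^ 2 := by
      funext x
      ring
    rw [hf]
    refine ((hasStrictFDerivAt_norm_sq r).hasFDerivAt.const_mul (k / 2)).congr_fderiv ?_
    ext y
    simp
    ring
  by_cases hsmall : k * ‖r‖ < um
  · have hloc : satPotential k um =ᶠ[𝓝 r] fun x : E => k * ‖x‖ ^ 2 / 2 := by
      have : ∀ᶠ x in 𝓝 r, k * ‖x‖ < um :=
        (continuous_const.mul continuous_norm).continuousAt.eventually_lt continuousAt_const hsmall
      filter_upwards [this] with x hx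
      simp [satPotential, max_eq_right (sub_nonpos.2 hx.le)]
    simpa [max_eq_right (sub_nonpos.2 hsmall.le)] using hquad.congr_of_eventuallyEq hloc
  · have hr : r ≠ 0 := by
      rintro rfl
      simp at hsmall
      linarith
    have hmax := ((hasDerivAt_max_zero_sq _).comp_hasFDerivAt r
      (((hasFDerivAt_norm hr).const_mul k).sub_const um)).const_mul (2 * k)⁻¹
    have hP : satPotential k um = fun x : E =>
        k * ‖x‖ ^ 2 / 2 - (2 * k)⁻¹ * ((fun y : ℝ => max y 0 ^ 2) ∘ fun x => k * ‖x‖ - um) x := by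
      funext x
      simp only [satPotential, Function.comp_apply]
      ring
    rw [hP]
    refine (hquad.sub hmax).congr_fderiv ?_
    ext y
    simp
    field_simp

theorem hasDerivAt_satPotential_add_half_norm_sq {k um c : ℝ} (hk : 0 < k) (hum : 0 < um)
    {r v : ℝ → E} {t : ℝ} (hr : HasDerivAt r (v t) t)
    (hv : HasDerivAt v (saturate um (-(k • r t)) - c • v t) t) :
    HasDerivAt (fun s => satPotential k um (r s) + ‖v s‖ ^ 2 / 2) (-c * ‖v t‖ ^ 2) t := by
  have hpot := (hasFDerivAt_satPotential hk hum (r t)).comp_hasDerivAt t hr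
  refine (hpot.add (hv.norm_sq.div_const 2)).congr_deriv ?_
  simp only [innerSL_apply_apply, saturate_neg, inner_sub_right, inner_neg_right,
    real_inner_smul_right, real_inner_comm (v t), real_inner_self_eq_norm_sq]
  ring

/-- Along trajectories of ṙ̄ = v, v̇ = σ(−k₁ r̄) − C_d v with the saturated
control, the Lyapunov function V has time derivative −C_d‖v(t)‖²; in particular V is
non-increasing along trajectories. -/
theorem stmt_14 (k₁ Cd um : ℝ) (hk₁ : 0 < k₁) (hCd : 0 < Cd) (hum : 0 < um)
    (sat : EuclideanSpace ℝ (Fin 2) → EuclideanSpace ℝ (Fin 2))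
    (hsat : ∀ u, sat u = if ‖u‖ ≤ um then u else (um / ‖u‖) • u)
    (V : EuclideanSpace ℝ (Fin 2) × EuclideanSpace ℝ (Fin 2) → ℝ)
    (hV : ∀ p, V p =
      if ‖p.1‖ < um / k₁ then k₁ * ‖p.1‖ ^ 2 / 2 + ‖p.2‖ ^ 2 / 2
      else um * ‖p.1‖ + ‖p.2‖ ^ 2 / 2 - um ^ 2 / (2 * k₁))
    (rb v : ℝ → EuclideanSpace ℝ (Fin 2))
    (hrb : Differentiable ℝ rb) (hv : Differentiable ℝ v)
    (hdr : ∀ t, 0 ≤ t → deriv rb t = v t)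
    (hdv : ∀ t, 0 ≤ t → deriv v t = sat (-(k₁ • rb t)) - Cd • v t) :
    (∀ t, 0 ≤ t → HasDerivAt (fun s => V (rb s, v s)) (-Cd * ‖v t‖ ^ 2) t) ∧
    AntitoneOn (fun t => V (rb t, v t)) (Set.Ici 0) := by
  obtain rfl : sat = saturate um := funext hsat
  obtain rfl : V = fun p => satPotential k₁ um p.1 + ‖p.2‖ ^ 2 / 2 := by
    funext p
    rw [hV, satPotential_eq_ite hk₁]
    split_ifs <;> ring
  have hderiv : ∀ t, 0 ≤ t →
      HasDerivAt (fun s => satPotential k₁ um (rb s) + ‖v s‖ ^ 2 / 2) (-Cd * ‖v t‖ ^ 2) t :=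
    fun t ht => hasDerivAt_satPotential_add_half_norm_sq hk₁ hum
      (hdr t ht ▸ (hrb t).hasDerivAt) (hdv t ht ▸ (hv t).hasDerivAt)
  refine ⟨hderiv, antitoneOn_of_hasDerivWithinAt_nonpos (f' := fun t => -Cd * ‖v t‖ ^ 2)
    (convex_Ici 0) (fun t ht => (hderiv t ht).continuousAt.continuousWithinAt)
    (fun t ht => ?_) (fun t _ => ?_)⟩
  · rw [interior_Ici] at ht ⊢
    exact (hderiv t ht.le).hasDerivWithinAt
  · exact mul_nonpos_of_nonpos_of_nonneg (neg_nonpos.2 hCd.le) (sq_nonneg _)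
end
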